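/- Fix j1 ∈ [n] and i, l ∈ [d²]. The mixed second-order partial derivative ∂²f(x)_{j1}/∂x_i∂x_l equals f(x)_{j1} ∘ 𝖠_{[j1],i} ∘ 𝖠_{[j1],l} − f(x)_{j1} ∘ 𝖠_{[j1],i} · ⟨f(x)_{j1}, 𝖠_{[j1],l}⟩ − f(x)_{j1} ∘ 𝖠_{[j1],l} · ⟨f(x)_{j1}, 𝖠_{[j1],i}⟩ + 2 f(x)_{j1} · ⟨f(x)_{j1}, 𝖠_{[j1],i}⟩ · ⟨f(x)_{j1}, 𝖠_{[j1],l}⟩ − f(x)_{j1} · ⟨f(x)_{j1}, 𝖠_{[j1],i} ∘ 𝖠_{[j1],l}⟩. -/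

import Mathlib

open Matrix Kronecker

noncomputable section

/-- The `i`-th column of the block `𝖠_{[j1]} ∈ ℝ^{n × d²}` of `𝖠 = A1 ⊗ A2`:
`(𝖠_{[j1],i})_{i2} = 𝖠_{(j1,i2), i}`. -/
def Acol {n d : ℕ} (A1 A2 : Matrix (Fin n) (Fin d) ℝ) (j1 : Fin n)
    (i : Fin d × Fin d) : Fin n → ℝ :=
  fun i2 => (A1 ⊗ₖ A2) (j1, i2) i

/-- `u(x)_{j1} = exp(𝖠_{[j1]} x) ∈ ℝⁿ` (entrywise `exp`), for `𝖠 = A1 ⊗ A2`. -/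
def uvec {n d : ℕ} (A1 A2 : Matrix (Fin n) (Fin d) ℝ) (j1 : Fin n)
    (x : Fin d × Fin d → ℝ) : Fin n → ℝ :=
  fun i2 => Real.exp (∑ q : Fin d × Fin d, (A1 ⊗ₖ A2) (j1, i2) q * x q)

/-- `α(x)_{j1} = ⟨exp(𝖠_{[j1]} x), 1_n⟩`. -/
def alphaval {n d : ℕ} (A1 A2 : Matrix (Fin n) (Fin d) ℝ) (j1 : Fin n)
    (x : Fin d × Fin d → ℝ) : ℝ :=
  ∑ i2 : Fin n, uvec A1 A2 j1 x i2

/-- `f(x)_{j1} = α(x)_{j1}⁻¹ · u(x)_{j1} ∈ ℝⁿ`. -/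
def fvec {n d : ℕ} (A1 A2 : Matrix (Fin n) (Fin d) ℝ) (j1 : Fin n)
    (x : Fin d × Fin d → ℝ) : Fin n → ℝ :=
  fun i2 => (alphaval A1 A2 j1 x)⁻¹ * uvec A1 A2 j1 x i2

/-!
Along the block `𝖠_{[j1]}`, `f(·)_{j1}` is the softmax map `s(w)_k = e^{w_k} / ∑_j e^{w_j}`
composed with the linear map `x ↦ 𝖠_{[j1]} x`. The softmax has Jacobian `diag s − s sᵀ`, i.e.
`∂_c s = s ∘ (c − ⟨s, c⟩)`; differentiating this once more in direction `v` by the product rule gives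
the five-term formula. Since the inner map is linear, the chain rule turns the coordinate directions
`e_i`, `e_l` into the columns `𝖠_{[j1],i}`, `𝖠_{[j1],l}`.
-/

open Real Finset

section Chain

variable {𝕜 E F G : Type*} [NontriviallyNormedField 𝕜]
  [NormedAddCommGroup E] [NormedSpace 𝕜 E] [NormedAddCommGroup F] [NormedSpace 𝕜 F]
  [NormedAddCommGroup G] [NormedSpace 𝕜 G]

theorem fderiv_fderiv_comp_clm_apply {Φ : F → G} (hΦ : ContDiff 𝕜 2 Φ) (L : E →L[𝕜] F)
    (x u v : E) :
    fderiv 𝕜 (fun y => fderiv 𝕜 (Φ ∘ L) y u) x v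
      = fderiv 𝕜 (fun w => fderiv 𝕜 Φ w (L u)) (L x) (L v) := by
  have hΦ1 : Differentiable 𝕜 Φ := hΦ.differentiable (by norm_num)
  have hΦ' : Differentiable 𝕜 (fun w => fderiv 𝕜 Φ w (L u)) :=
    ((hΦ.fderiv_right (m := 1) (by norm_num)).clm_apply contDiff_const).differentiable
      (by norm_num)
  have hcomp : (fun y => fderiv 𝕜 (Φ ∘ L) y u) = (fun w => fderiv 𝕜 Φ w (L u)) ∘ L := by
    funext y
    rw [fderiv_comp y (hΦ1 _) L.differentiableAt, L.fderiv]
    rfl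
  rw [hcomp, fderiv_comp x (hΦ' _) L.differentiableAt, L.fderiv]
  rfl

end Chain

section Softmax

variable {ι : Type*} [Fintype ι]

local notation "proj" => ContinuousLinearMap.proj (R := ℝ) (φ := fun _ : ι => ℝ)

def softmax (w : ι → ℝ) : ι → ℝ := fun k => (∑ j, exp (w j))⁻¹ * exp (w k)

theorem sum_exp_pos [Nonempty ι] (w : ι → ℝ) : 0 < ∑ j, exp (w j) :=
  Finset.sum_pos (fun j _ => exp_pos (w j)) univ_nonempty

theorem contDiff_softmax {n : WithTop ℕ∞} : ContDiff ℝ n (softmax (ι := ι)) := by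
  refine contDiff_pi.2 fun k => ?_
  have : Nonempty ι := ⟨k⟩
  exact ((ContDiff.sum fun j _ => (contDiff_apply ℝ ℝ j).exp).inv
    fun w => (sum_exp_pos w).ne').mul (contDiff_apply ℝ ℝ k).exp

theorem hasFDerivAt_softmax_apply (w : ι → ℝ) (k : ι) :
    HasFDerivAt (fun w => softmax w k)
      (softmax w k • (proj k - ∑ j, softmax w j • proj j)) w := by
  have : Nonempty ι := ⟨k⟩
  have hexp : ∀ j, HasFDerivAt (fun w : ι → ℝ => exp (w j)) (exp (w j) • proj j) w :=
    fun j => (hasFDerivAt_apply j w).exp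
  have hinv := (hasDerivAt_inv (sum_exp_pos w).ne').comp_hasFDerivAt w
    (HasFDerivAt.fun_sum (u := univ) fun j _ => hexp j)
  refine (hinv.mul (hexp k)).congr_fderiv ?_
  ext v
  simp only [softmax, Function.comp_apply, _root_.add_apply, _root_.smul_apply,
    _root_.sub_apply, _root_.sum_apply, ContinuousLinearMap.proj_apply, smul_eq_mul]
  simp only [mul_assoc, ← Finset.mul_sum]
  field_simp
  ring

theorem fderiv_softmax_apply (w v : ι → ℝ) :
    fderiv ℝ softmax w v = fun k => softmax w k * (v k - softmax w ⬝ᵥ v) := by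
  rw [(hasFDerivAt_pi.2 (hasFDerivAt_softmax_apply w)).fderiv]
  ext k
  simp [dotProduct]

theorem fderiv_fderiv_softmax_apply (w c v : ι → ℝ) :
    fderiv ℝ (fun w => fderiv ℝ softmax w c) w v = fun k =>
      softmax w k * c k * v k - softmax w k * c k * (softmax w ⬝ᵥ v)
        - softmax w k * v k * (softmax w ⬝ᵥ c)
        + 2 * softmax w k * (softmax w ⬝ᵥ c) * (softmax w ⬝ᵥ v)
        - softmax w k * (softmax w ⬝ᵥ (c * v)) := by
  simp_rw [fderiv_softmax_apply]
  have hdot := HasFDerivAt.fun_sum (u := univ) fun j _ =>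
    (hasFDerivAt_softmax_apply w j).mul_const (c j)
  have hD : HasFDerivAt (fun w k => softmax w k * (c k - softmax w ⬝ᵥ c)) _ w :=
    hasFDerivAt_pi.2 fun k => (hasFDerivAt_softmax_apply w k).mul (hdot.const_sub (c k))
  rw [hD.fderiv]
  ext k
  have hsum : ∑ j, c j * (softmax w j * (v j - ∑ i, softmax w i * v i))
      = ∑ j, softmax w j * (c j * v j) - (∑ j, softmax w j * c j) * ∑ j, softmax w j * v j := by
    rw [Finset.sum_mul, ← Finset.sum_sub_distrib]
    exact Finset.sum_congr rfl fun j _ => by ring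
  simp only [dotProduct, Pi.mul_apply, ContinuousLinearMap.pi_apply, _root_.add_apply,
    _root_.smul_apply, _root_.sub_apply, _root_.sum_apply, _root_.neg_apply,
    ContinuousLinearMap.proj_apply, smul_eq_mul, hsum]
  ring

end Softmax

/-- The block `𝖠_{[j1]}` of `A1 ⊗ A2`. -/
def kronBlock {n d : ℕ} (A1 A2 : Matrix (Fin n) (Fin d) ℝ) (j1 : Fin n) :
    Matrix (Fin n) (Fin d × Fin d) ℝ :=
  (A1 ⊗ₖ A2).submatrix (fun i2 => (j1, i2)) id

section KronBlock

variable {n d : ℕ} (A1 A2 : Matrix (Fin n) (Fin d) ℝ) (j1 : Fin n)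

theorem fvec_eq_softmax_comp :
    fvec A1 A2 j1 = softmax ∘ (kronBlock A1 A2 j1).mulVecLin.toContinuousLinearMap :=
  rfl

theorem kronBlock_mulVec_single (m : Fin d × Fin d) :
    kronBlock A1 A2 j1 *ᵥ Pi.single m 1 = Acol A1 A2 j1 m := by
  rw [mulVec_single_one]
  rfl

end KronBlock

/-- For fixed `j1 ∈ [n]` and `i, l ∈ [d²]`,
`∂² f(x)_{j1} / ∂x_i ∂x_l
  = f(x)_{j1} ∘ 𝖠_{[j1],i} ∘ 𝖠_{[j1],l}
    − f(x)_{j1} ∘ 𝖠_{[j1],i} · ⟨f(x)_{j1}, 𝖠_{[j1],l}⟩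
    − f(x)_{j1} ∘ 𝖠_{[j1],l} · ⟨f(x)_{j1}, 𝖠_{[j1],i}⟩
    + 2 f(x)_{j1} · ⟨f(x)_{j1}, 𝖠_{[j1],i}⟩ · ⟨f(x)_{j1}, 𝖠_{[j1],l}⟩
    − f(x)_{j1} · ⟨f(x)_{j1}, 𝖠_{[j1],i} ∘ 𝖠_{[j1],l}⟩`. -/
theorem second_deriv_fvec (n d : ℕ) (A1 A2 : Matrix (Fin n) (Fin d) ℝ)
    (j1 : Fin n) (i l : Fin d × Fin d) (x : Fin d × Fin d → ℝ) :
    fderiv ℝ (fun y : Fin d × Fin d → ℝ =>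
        fderiv ℝ (fun z : Fin d × Fin d → ℝ => fvec A1 A2 j1 z) y (Pi.single i 1))
      x (Pi.single l 1)
      = fun i2 =>
          fvec A1 A2 j1 x i2 * Acol A1 A2 j1 i i2 * Acol A1 A2 j1 l i2
          - fvec A1 A2 j1 x i2 * Acol A1 A2 j1 i i2
              * (∑ i2' : Fin n, fvec A1 A2 j1 x i2' * Acol A1 A2 j1 l i2')
          - fvec A1 A2 j1 x i2 * Acol A1 A2 j1 l i2
              * (∑ i2' : Fin n, fvec A1 A2 j1 x i2' * Acol A1 A2 j1 i i2')
          + 2 * fvec A1 A2 j1 x i2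
              * (∑ i2' : Fin n, fvec A1 A2 j1 x i2' * Acol A1 A2 j1 i i2')
              * (∑ i2' : Fin n, fvec A1 A2 j1 x i2' * Acol A1 A2 j1 l i2')
          - fvec A1 A2 j1 x i2
              * ∑ i2' : Fin n, fvec A1 A2 j1 x i2'
                  * (Acol A1 A2 j1 i i2' * Acol A1 A2 j1 l i2') := by
  rw [fvec_eq_softmax_comp, fderiv_fderiv_comp_clm_apply contDiff_softmax]
  simp only [LinearMap.coe_toContinuousLinearMap', mulVecLin_apply, kronBlock_mulVec_single,
    fderiv_fderiv_softmax_apply]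
  rfl
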